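/- arXiv:1301.0849 — 3 statements merged into one kernel-verified Lean document; each statement's English description precedes it below -/
import Mathlib

section
/- Let p0 be a node of the syntax tree of e with π(p0) a Kleene star with child p1. Suppose there exist two distinct paths t1 ≠ t2 with t1 : p1 ⇒[w] p0 and t2 : p1 ⇒[w] p0 for some string w; suppose x is a string with a path p_root ⇒[x] p0; let n ∈ ℕ and let z be a string such that no PWπ run from ⟨p_root; x·wⁿ·z⟩ reaches a configuration ⟨⊥; u⟩ for any string u. Then every finite sequence of PWFπ transitions from the initial configuration [⟨p_root; x·wⁿ·z⟩] to the empty list has length at least 2ⁿ. -/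
/-!
Formalization of backtracking regular-expression matching (PWπ / PWFπ / HFπ machines).

Nodes of the syntax tree of a fixed regular expression `e` are represented as
positions (lists of booleans: `false` = left/only child, `true` = right child).
`e.sub p` is the subexpression at position `p` (`none` if the position is invalid),
and `e.kont p` is the continuation pointer `k(p)` (`none` represents `⊥`).
-/

inductive RE (σ : Type) : Type where
  | sym : σ → RE σ
  | eps : RE σ
  | cat : RE σ → RE σ → RE σ
  | alt : RE σ → RE σ → RE σ
  | star : RE σ → RE σ

/-- A position (node) in the syntax tree. The root is `[]`. -/
abbrev RPos : Type := List Bool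

/-- A node pointer: either a position or `⊥` (represented by `none`). -/
abbrev RNode : Type := Option RPos

/-- A configuration of the PWπ machine: a pointer and the remaining input. -/
abbrev RConf (σ : Type) : Type := RNode × List σ

namespace RE

variable {σ : Type}

/-- The subexpression `π(p)` of `e` at position `p` (`none` if `p` is invalid). -/
def sub : RE σ → RPos → Option (RE σ)
  | f, [] => some f
  | cat f1 f2, b :: p => sub (if b then f2 else f1) p
  | alt f1 f2, b :: p => sub (if b then f2 else f1) p
  | star f1, false :: p => sub f1 p
  | _, _ => none

/-- `kontAux f cur rest kc` computes the continuation of the node at position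
`cur ++ rest`, where `f` is the subexpression at `cur` and `kc` is the
continuation of the node at `cur`. -/
def kontAux : RE σ → RPos → RPos → RNode → RNode
  | _, _, [], kc => kc
  | cat f1 _, cur, false :: rest, _ => kontAux f1 (cur ++ [false]) rest (some (cur ++ [true]))
  | cat _ f2, cur, true :: rest, kc => kontAux f2 (cur ++ [true]) rest kc
  | alt f1 _, cur, false :: rest, kc => kontAux f1 (cur ++ [false]) rest kc
  | alt _ f2, cur, true :: rest, kc => kontAux f2 (cur ++ [true]) rest kc
  | star f1, cur, false :: rest, _ => kontAux f1 (cur ++ [false]) rest (some cur)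
  | _, _, _, _ => none

/-- The continuation pointer `k(p)`; `k(p_root) = ⊥ = none`. -/
def kont (e : RE σ) (p : RPos) : RNode := kontAux e [] p none

/-- `π` extended to node pointers. -/
def subN (e : RE σ) : RNode → Option (RE σ)
  | none => none
  | some p => e.sub p

/-- `k` extended to node pointers. -/
def kontN (e : RE σ) : RNode → RNode
  | none => none
  | some p => e.kont p

/-- The language of a regular expression. -/
def lang : RE σ → Language σ
  | sym a => {[a]}
  | eps => 1
  | cat f1 f2 => lang f1 * lang f2
  | alt f1 f2 => lang f1 + lang f2
  | star f => KStar.kstar (lang f)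

/-- The transition relation of the PWπ machine. -/
inductive PWStep (e : RE σ) : RConf σ → RConf σ → Prop
  | altL {p : RPos} {f1 f2 : RE σ} {w : List σ} :
      e.sub p = some (alt f1 f2) → PWStep e (some p, w) (some (p ++ [false]), w)
  | altR {p : RPos} {f1 f2 : RE σ} {w : List σ} :
      e.sub p = some (alt f1 f2) → PWStep e (some p, w) (some (p ++ [true]), w)
  | starK {p : RPos} {f1 : RE σ} {w : List σ} :
      e.sub p = some (star f1) → PWStep e (some p, w) (e.kont p, w)
  | starI {p : RPos} {f1 : RE σ} {w : List σ} :
      e.sub p = some (star f1) → PWStep e (some p, w) (some (p ++ [false]), w)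
  | catL {p : RPos} {f1 f2 : RE σ} {w : List σ} :
      e.sub p = some (cat f1 f2) → PWStep e (some p, w) (some (p ++ [false]), w)
  | symC {p : RPos} {a : σ} {w : List σ} :
      e.sub p = some (sym a) → PWStep e (some p, a :: w) (e.kont p, w)
  | epsC {p : RPos} {w : List σ} :
      e.sub p = some eps → PWStep e (some p, w) (e.kont p, w)

/-- `IsPath e t p w q` : `t : p ⇒[w] q` is a path of pointers labelled by the string `w`. -/
inductive IsPath (e : RE σ) : List RNode → RNode → List σ → RNode → Prop
  | single (p : RNode) : IsPath e [p] p [] p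
  | snoc {t : List RNode} {p q q' : RNode} {w w' w1 : List σ} :
      IsPath e t p w q → PWStep e (q, w' ++ w1) (q', w1) →
      IsPath e (t ++ [q']) p (w ++ w') q'

/-- The transition relation of the PWFπ (backtracking) machine on stacks of
PWπ configurations. -/
inductive PWFStep (e : RE σ) : List (RConf σ) → List (RConf σ) → Prop
  | one {c c' : RConf σ} {f : List (RConf σ)} :
      PWStep e c c' → (∀ d, PWStep e c d → d = c') → PWFStep e (c :: f) (c' :: f)
  | two {c c1 c2 : RConf σ} {f : List (RConf σ)} :
      PWStep e c c1 → PWStep e c c2 → c1 ≠ c2 →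
      (∀ d, PWStep e c d → d = c1 ∨ d = c2) → PWFStep e (c :: f) (c1 :: c2 :: f)
  | fail {c : RConf σ} {f : List (RConf σ)} :
      (∀ d, ¬ PWStep e c d) → PWFStep e (c :: f) f

end RE

/-- `NSteps R n a b` : there is a sequence of exactly `n` `R`-transitions from `a` to `b`. -/
def NSteps {α : Type*} (R : α → α → Prop) : ℕ → α → α → Prop
  | 0, a, b => a = b
  | n + 1, a, b => ∃ c, R a c ∧ NSteps R n c b

namespace RE

variable {σ : Type}

/-- A non-consuming PWπ transition, viewed as a relation on pointers. -/
def EpsStep (e : RE σ) (p q : RNode) : Prop := PWStep e (p, ([] : List σ)) (q, [])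

/-- `L` is (a list representing) `evolve(p)`: the nodes reachable from `p` by
non-consuming transitions whose subexpression is an input symbol. -/
def IsEvolve (e : RE σ) (p : RNode) (L : List RNode) : Prop :=
  ∀ q, q ∈ L ↔ (Relation.ReflTransGen (EpsStep e) p q ∧ ∃ a, e.subN q = some (sym a))

/-- `DRel e a P r` : `r` is a result of the derivative computation `D_a(P)`. -/
inductive DRel (e : RE σ) (a : σ) : List RNode → List RNode → Prop
  | nil : DRel e a [] []
  | symNe {h : RNode} {t r : List RNode} {b : σ} :
      e.subN h = some (sym b) → b ≠ a → DRel e a t r → DRel e a (h :: t) r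
  | symEq {h : RNode} {t r : List RNode} :
      e.subN h = some (sym a) → DRel e a t r → DRel e a (h :: t) (e.kontN h :: r)
  | ev {h : RNode} {t r L : List RNode} :
      (∀ b, e.subN h ≠ some (sym b)) → IsEvolve e h L →
      DRel e a (L ++ t) r → DRel e a (h :: t) r

/-- The transition relation on wP frames: `(w, P) → (w·a, D_a(P))` when `D_a(P) ≠ []`. -/
inductive WPStep (e : RE σ) : List σ × List RNode → List σ × List RNode → Prop
  | mk {w : List σ} {P : List RNode} {a : σ} {r : List RNode} :
      DRel e a P r → r ≠ [] → WPStep e (w, P) (w ++ [a], r)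

end RE

/-- A configuration of the HFπ machine: a history (set of node-sets) and a
queue of wP frames. -/
abbrev HFConf (σ : Type) : Type := Finset (Finset RNode) × List (List σ × List RNode)

namespace RE

variable {σ : Type}

/-- The transition relation of the HFπ machine: the head frame `(w, P)` is replaced by
exactly those of its wP-successors (one for each viable symbol) whose node-sets are
not in the history `H`, and their node-sets are added to `H`. -/
inductive HFStep (e : RE σ) : HFConf σ → HFConf σ → Prop
  | mk {H : Finset (Finset RNode)} {w : List σ} {P : List RNode}
      {f : List (List σ × List RNode)} (l : List (σ × List RNode)) :
      (l.map Prod.fst).Nodup →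
      (∀ x ∈ l, DRel e x.1 P x.2 ∧ x.2 ≠ [] ∧ x.2.toFinset ∉ H) →
      (∀ (a : σ) (r : List RNode), DRel e a P r → r ≠ [] → r.toFinset ∉ H →
        ∃ r', (a, r') ∈ l ∧ r'.toFinset = r.toFinset) →
      HFStep e (H, (w, P) :: f)
        (H ∪ (l.map (fun x => x.2.toFinset)).toFinset,
         f ++ l.map (fun x => (w ++ [x.1], x.2)))

/-- Every starred subexpression of `e` has a body that does not match the empty string. -/
def NonNullableStars (e : RE σ) : Prop :=
  ∀ (p : RPos) (f : RE σ), e.sub p = some (star f) → ([] : List σ) ∉ lang f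

end RE

/-!
Each configuration on the stack of the backtracking machine has a cost: the number of steps the
machine spends before that configuration and everything it spawns have been popped. A single
transition does not lower the cost, and a configuration with two distinct successors costs at least
the sum of their costs. The input consumed by a step is determined by its source node, so two
distinct paths `p1 ⇒[w] p0` read `w` in lockstep until they branch (or one of them runs through a
cycle, making the cost unbounded); hence the cost of `⟨p0; w·v⟩` is at least twice that of
`⟨p0; v⟩`; iterating `n` times through the star yields `2ⁿ`.
-/

namespace RE

variable {σ : Type} {e : RE σ}

def LabelledStep (e : RE σ) (p : RNode) (v : List σ) (q : RNode) : Prop :=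
  ∀ u, PWStep e (p, v ++ u) (q, u)

theorem PWStep.exists_labelledStep {p q : RNode} {s s' : List σ} (h : PWStep e (p, s) (q, s')) :
    ∃ v, s = v ++ s' ∧ LabelledStep e p v q := by
  cases h with
  | altL hs => exact ⟨[], rfl, fun _ => .altL hs⟩
  | altR hs => exact ⟨[], rfl, fun _ => .altR hs⟩
  | starK hs => exact ⟨[], rfl, fun _ => .starK hs⟩
  | starI hs => exact ⟨[], rfl, fun _ => .starI hs⟩
  | catL hs => exact ⟨[], rfl, fun _ => .catL hs⟩
  | symC hs => exact ⟨[_], rfl, fun _ => .symC hs⟩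
  | epsC hs => exact ⟨[], rfl, fun _ => .epsC hs⟩

theorem PWStep.labelledStep {p q : RNode} {v u : List σ} (h : PWStep e (p, v ++ u) (q, u)) :
    LabelledStep e p v q := by
  obtain ⟨v', hv, hstep⟩ := h.exists_labelledStep
  rwa [List.append_cancel_right hv]

theorem LabelledStep.label_eq {p q₁ q₂ : RNode} {v₁ v₂ : List σ} (h₁ : LabelledStep e p v₁ q₁)
    (h₂ : LabelledStep e p v₂ q₂) : v₁ = v₂ := by
  have h₁ := h₁ []
  have h₂ := h₂ []
  rw [List.append_nil] at h₁ h₂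
  cases h₁ <;> cases h₂ <;> simp_all

/-- Paths built from the front, the form in which two paths can be compared at their first
divergence. -/
inductive ConsPath (e : RE σ) : List RNode → RNode → List σ → RNode → Prop
  | single (p : RNode) : ConsPath e [p] p [] p
  | cons {p p' q : RNode} {t : List RNode} {v w : List σ} :
      LabelledStep e p v p' → ConsPath e t p' w q → ConsPath e (p :: t) p (v ++ w) q

theorem ConsPath.snoc {t : List RNode} {p q q' : RNode} {w v : List σ} (h : ConsPath e t p w q)
    (hs : LabelledStep e q v q') : ConsPath e (t ++ [q']) p (w ++ v) q' := by
  induction h with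
  | single p => simpa using ConsPath.cons hs (.single q')
  | cons hstep _ ih => simpa using ConsPath.cons hstep (ih hs)

theorem IsPath.consPath {t : List RNode} {p q : RNode} {w : List σ} (h : IsPath e t p w q) :
    ConsPath e t p w q := by
  induction h with
  | single p => exact .single p
  | snoc _ hstep ih => exact ih.snoc hstep.labelledStep

theorem ConsPath.reflTransGen {t : List RNode} {p q : RNode} {w : List σ} (h : ConsPath e t p w q)
    (u : List σ) : Relation.ReflTransGen (PWStep e) (p, w ++ u) (q, u) := by
  induction h with
  | single p => exact .refl
  | cons hstep _ ih => simpa using Relation.ReflTransGen.head (hstep _) ih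

theorem PWFStep.cases_of_pwStep {c c' : RConf σ} {f g : List (RConf σ)} (hs : PWStep e c c')
    (h : PWFStep e (c :: f) g) :
    g = c' :: f ∨ (∃ d, g = c' :: d :: f) ∨ ∃ d, g = d :: c' :: f := by
  cases h with
  | one _ huniq => exact .inl (by rw [huniq c' hs])
  | two _ _ _ hall =>
    rcases hall c' hs with rfl | rfl
    · exact .inr (.inl ⟨_, rfl⟩)
    · exact .inr (.inr ⟨_, rfl⟩)
  | fail hno => exact absurd hs (hno c')

theorem PWFStep.eq_of_branch {c c₁ c₂ : RConf σ} {f g : List (RConf σ)} (hs₁ : PWStep e c c₁)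
    (hs₂ : PWStep e c c₂) (hne : c₁ ≠ c₂) (h : PWFStep e (c :: f) g) :
    g = c₁ :: c₂ :: f ∨ g = c₂ :: c₁ :: f := by
  cases h with
  | one _ huniq => exact absurd ((huniq c₁ hs₁).trans (huniq c₂ hs₂).symm) hne
  | two _ _ _ hall =>
    rcases hall c₁ hs₁ with rfl | rfl <;> rcases hall c₂ hs₂ with rfl | rfl
    all_goals first | exact absurd rfl hne | simp
  | fail hno => exact absurd hs₁ (hno c₁)

def CostsAtLeast (e : RE σ) (c : RConf σ) (k : ℕ) : Prop :=
  ∀ m f, NSteps (PWFStep e) m (c :: f) [] → ∃ m', NSteps (PWFStep e) m' f [] ∧ m' + k ≤ m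

theorem CostsAtLeast.mono {c : RConf σ} {j k : ℕ} (h : CostsAtLeast e c k) (hjk : j ≤ k) :
    CostsAtLeast e c j := fun m f hm => by
  obtain ⟨m', hm', hle⟩ := h m f hm
  exact ⟨m', hm', by omega⟩

theorem costsAtLeast_one (c : RConf σ) : CostsAtLeast e c 1 := by
  intro m
  induction m using Nat.strong_induction_on generalizing c with
  | _ m ih =>
    intro f hm
    match m, hm with
    | 0, hm => exact absurd hm (List.cons_ne_nil c f)
    | m + 1, ⟨g, hg, hrest⟩ =>
      cases hg with
      | one =>
        obtain ⟨m', hm', hle⟩ := ih m (by omega) _ _ hrest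
        exact ⟨m', hm', by omega⟩
      | two =>
        obtain ⟨m₁, hm₁, hle₁⟩ := ih m (by omega) _ _ hrest
        obtain ⟨m₂, hm₂, hle₂⟩ := ih m₁ (by omega) _ _ hm₁
        exact ⟨m₂, hm₂, by omega⟩
      | fail => exact ⟨m, hrest, by omega⟩

theorem CostsAtLeast.cons_cons {a b : RConf σ} {ka kb m : ℕ} {f : List (RConf σ)}
    (ha : CostsAtLeast e a ka) (hb : CostsAtLeast e b kb)
    (h : NSteps (PWFStep e) m (a :: b :: f) []) :
    ∃ m', NSteps (PWFStep e) m' f [] ∧ m' + (ka + kb) ≤ m := by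
  obtain ⟨m₁, hm₁, hle₁⟩ := ha m _ h
  obtain ⟨m₂, hm₂, hle₂⟩ := hb m₁ _ hm₁
  exact ⟨m₂, hm₂, by omega⟩

theorem CostsAtLeast.of_pwStep {c c' : RConf σ} {k : ℕ} (hs : PWStep e c c')
    (h : CostsAtLeast e c' k) : CostsAtLeast e c (k + 1) := by
  rintro (_ | m) f hm
  · exact absurd hm (List.cons_ne_nil c f)
  obtain ⟨g, hg, hrest⟩ := hm
  rcases hg.cases_of_pwStep hs with rfl | ⟨d, rfl⟩ | ⟨d, rfl⟩
  · obtain ⟨m', hm', hle⟩ := h m f hrest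
    exact ⟨m', hm', by omega⟩
  · obtain ⟨m', hm', hle⟩ := h.cons_cons (costsAtLeast_one d) hrest
    exact ⟨m', hm', by omega⟩
  · obtain ⟨m', hm', hle⟩ := (costsAtLeast_one d).cons_cons h hrest
    exact ⟨m', hm', by omega⟩

theorem CostsAtLeast.of_reflTransGen {c c' : RConf σ} {k : ℕ}
    (hr : Relation.ReflTransGen (PWStep e) c c') (h : CostsAtLeast e c' k) : CostsAtLeast e c k := by
  induction hr using Relation.ReflTransGen.head_induction_on with
  | refl => exact h
  | head hs _ ih => exact (ih.of_pwStep hs).mono (Nat.le_succ k)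

theorem CostsAtLeast.of_branch {c c₁ c₂ : RConf σ} {k₁ k₂ : ℕ} (hs₁ : PWStep e c c₁)
    (hs₂ : PWStep e c c₂) (hne : c₁ ≠ c₂) (h₁ : CostsAtLeast e c₁ k₁)
    (h₂ : CostsAtLeast e c₂ k₂) : CostsAtLeast e c (k₁ + k₂) := by
  rintro (_ | m) f hm
  · exact absurd hm (List.cons_ne_nil c f)
  obtain ⟨g, hg, hrest⟩ := hm
  rcases hg.eq_of_branch hs₁ hs₂ hne with rfl | rfl
  · obtain ⟨m', hm', hle⟩ := h₁.cons_cons h₂ hrest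
    exact ⟨m', hm', by omega⟩
  · obtain ⟨m', hm', hle⟩ := h₂.cons_cons h₁ hrest
    exact ⟨m', hm', by omega⟩

theorem costsAtLeast_of_cycle {c c' : RConf σ} (hs : PWStep e c c')
    (hr : Relation.ReflTransGen (PWStep e) c' c) (k : ℕ) : CostsAtLeast e c k := by
  induction k with
  | zero => exact (costsAtLeast_one c).mono (Nat.zero_le 1)
  | succ k ih => exact (ih.of_reflTransGen hr).of_pwStep hs

theorem costsAtLeast_of_labelledStep_consPath {p p' : RNode} {t : List RNode}
    (hs : LabelledStep e p [] p') (ht : ConsPath e t p' [] p) (u : List σ) (k : ℕ) :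
    CostsAtLeast e (p, u) k :=
  costsAtLeast_of_cycle (hs u) (ht.reflTransGen u) k

theorem CostsAtLeast.two_mul_of_consPath_ne {t₁ t₂ : List RNode} {p q : RNode} {w u : List σ}
    {k : ℕ} (h₁ : ConsPath e t₁ p w q) (h₂ : ConsPath e t₂ p w q) (hne : t₁ ≠ t₂)
    (hk : CostsAtLeast e (q, u) k) : CostsAtLeast e (p, w ++ u) (2 * k) := by
  induction h₁ generalizing t₂ with
  | single p =>
    generalize hw : ([] : List σ) = w' at h₂
    cases h₂ with
    | single => exact absurd rfl hne
    | cons hstep htail =>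
      obtain ⟨rfl, rfl⟩ := List.append_eq_nil_iff.mp hw.symm
      exact costsAtLeast_of_labelledStep_consPath hstep htail _ _
  | @cons p p₁ q t₁ v w hstep₁ htail₁ ih =>
    generalize hw : v ++ w = w' at h₂
    cases h₂ with
    | single =>
      obtain ⟨rfl, rfl⟩ := List.append_eq_nil_iff.mp hw
      exact costsAtLeast_of_labelledStep_consPath hstep₁ htail₁ _ _
    | @cons _ p₂ _ t₂ v₂ w₂ hstep₂ htail₂ =>
      obtain rfl := hstep₁.label_eq hstep₂
      obtain rfl := List.append_cancel_left hw
      rw [List.append_assoc]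
      by_cases hp : p₁ = p₂
      · subst hp
        have hne' : t₁ ≠ t₂ := fun h => hne (by rw [h])
        exact ((ih htail₂ hne' hk).of_pwStep (hstep₁ _)).mono (Nat.le_succ _)
      · rw [two_mul]
        exact .of_branch (hstep₁ _) (hstep₂ _) (by simp [hp])
          (hk.of_reflTransGen (htail₁.reflTransGen u))
          (hk.of_reflTransGen (htail₂.reflTransGen u))

theorem costsAtLeast_two_pow {p₀ : RPos} {f : RE σ} (hstar : e.sub p₀ = some (star f))
    {w : List σ} {t₁ t₂ : List RNode} (hne : t₁ ≠ t₂)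
    (h₁ : IsPath e t₁ (some (p₀ ++ [false])) w (some p₀))
    (h₂ : IsPath e t₂ (some (p₀ ++ [false])) w (some p₀)) (u : List σ) (n : ℕ) :
    CostsAtLeast e (some p₀, (List.replicate n w).flatten ++ u) (2 ^ n) := by
  induction n with
  | zero => simpa using costsAtLeast_one (e := e) (some p₀, u)
  | succ n ih =>
    have hbody := ih.two_mul_of_consPath_ne h₁.consPath h₂.consPath hne
    rw [List.replicate_succ, List.flatten_cons, List.append_assoc, pow_succ']
    exact (hbody.of_pwStep (.starI hstar)).mono (Nat.le_succ _)

end RE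

theorem exponential_blowup_general {σ : Type} (e : RE σ) (p0 : RPos) (f1 : RE σ)
    (hstar : e.sub p0 = some (RE.star f1))
    (w x z : List σ) (n : ℕ)
    (t1 t2 : List RNode) (hne : t1 ≠ t2)
    (h1 : RE.IsPath e t1 (some (p0 ++ [false])) w (some p0))
    (h2 : RE.IsPath e t2 (some (p0 ++ [false])) w (some p0))
    (tx : List RNode) (hx : RE.IsPath e tx (some ([] : RPos)) x (some p0))
    (m : ℕ)
    (hrun : NSteps (RE.PWFStep e) m
      [(some ([] : RPos), x ++ (List.replicate n w).flatten ++ z)] []) :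
    2 ^ n ≤ m := by
  have hroot : RE.CostsAtLeast e (some [], x ++ ((List.replicate n w).flatten ++ z)) (2 ^ n) :=
    (RE.costsAtLeast_two_pow hstar hne h1 h2 z n).of_reflTransGen (hx.consPath.reflTransGen _)
  obtain ⟨m', -, hle⟩ := hroot m [] (by rwa [List.append_assoc] at hrun)
  omega

/-- Theorem 1: if the Kleene expression at `p0` admits two distinct
paths from its body `p1` back to `p0` on the same string `w` (a pumpable string),
`x` is a prefix leading the matcher from the root to `p0`, and the suffix `z` makes
the whole input `x·wⁿ·z` fail to match, then every run of the backtracking PWFπ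
machine from the initial configuration to the empty stack takes at least `2ⁿ` steps. -/
theorem exponential_blowup {σ : Type} (e : RE σ) (p0 : RPos) (f1 : RE σ)
    (hstar : e.sub p0 = some (RE.star f1))
    (w x z : List σ) (n : ℕ)
    (t1 t2 : List RNode) (hne : t1 ≠ t2)
    (h1 : RE.IsPath e t1 (some (p0 ++ [false])) w (some p0))
    (h2 : RE.IsPath e t2 (some (p0 ++ [false])) w (some p0))
    (tx : List RNode) (hx : RE.IsPath e tx (some ([] : RPos)) x (some p0))
    (hfail : ¬ ∃ u : List σ, Relation.ReflTransGen (RE.PWStep e)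
      (some ([] : RPos), x ++ (List.replicate n w).flatten ++ z) (none, u))
    (m : ℕ)
    (hrun : NSteps (RE.PWFStep e) m
      [(some ([] : RPos), x ++ (List.replicate n w).flatten ++ z)] []) :
    2 ^ n ≤ m :=
  exponential_blowup_general e p0 f1 hstar w x z n t1 t2 hne h1 h2 tx hx m hrun
end

section
/- wP frame invariant: assume that for every subexpression of e of the form f*, the body f does not match the empty string (so evolve and D are well-defined). Fix a node p1 of the syntax tree of e. If (ε, [p1]) →* (w, P) is a finite sequence of wP-frame transitions with w nonempty, then for every node q: q occurs in P if and only if there exists a path t : p1 ⇒[w] q whose final transition consumes the last symbol of w (i.e., the last step of t is a symbol-consuming PWπ transition). -/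
/-!
The wP frames maintain a stronger invariant: the nodes reachable from `p1` by a path reading
`w` are exactly those reachable from `P` by non-consuming steps. It holds initially, and `D_a`
preserves it because `D_a(P)` collects the continuations `k(h)` of the `a`-nodes `h` reachable
from `P` without consuming input, while a path reading `w·a` is a path reading `w`, followed by
a consuming `a`-step and then non-consuming steps. The theorem follows by looking at the last
frame transition of the run.
-/

namespace RE

variable {σ : Type} {e : RE σ}

def Reaches (e : RE σ) (p : RNode) (w : List σ) (q : RNode) : Prop :=
  ∃ t, IsPath e t p w q

def IsFrontier (e : RE σ) (p : RNode) (w : List σ) (P : List RNode) : Prop :=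
  ∀ q, Reaches e p w q ↔ ∃ g ∈ P, Relation.ReflTransGen (EpsStep e) g q

theorem PWStep.eps_or_sym {p q : RNode} {u v : List σ} (h : PWStep e (p, u) (q, v)) :
    (u = v ∧ EpsStep e p q) ∨ ∃ a, u = a :: v ∧ e.subN p = some (sym a) ∧ q = e.kontN p := by
  cases h with
  | altL h => exact Or.inl ⟨rfl, .altL h⟩
  | altR h => exact Or.inl ⟨rfl, .altR h⟩
  | starK h => exact Or.inl ⟨rfl, .starK h⟩
  | starI h => exact Or.inl ⟨rfl, .starI h⟩
  | catL h => exact Or.inl ⟨rfl, .catL h⟩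
  | symC h => exact Or.inr ⟨_, rfl, h, rfl⟩
  | epsC h => exact Or.inl ⟨rfl, .epsC h⟩

theorem pwStep_singleton_iff {h q : RNode} {a : σ} :
    PWStep e (h, [a]) (q, []) ↔ e.subN h = some (sym a) ∧ q = e.kontN h := by
  constructor
  · intro hs
    rcases hs.eps_or_sym with ⟨hne, -⟩ | ⟨b, hb, hsym, hq⟩
    · cases hne
    · cases hb
      exact ⟨hsym, hq⟩
  · rintro ⟨hsym, rfl⟩
    cases h with
    | none => cases hsym
    | some p => exact .symC hsym

theorem not_epsStep_of_sym {h q : RNode} {b : σ} (hs : e.subN h = some (sym b)) :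
    ¬ EpsStep e h q := by
  intro hstep
  cases hstep <;> simp_all [subN]

theorem eq_of_reflTransGen_of_sym {h q : RNode} {b : σ} (hs : e.subN h = some (sym b))
    (hr : Relation.ReflTransGen (EpsStep e) h q) : q = h := by
  rcases hr.cases_head with rfl | ⟨c, hc, -⟩
  · rfl
  · exact absurd hc (not_epsStep_of_sym hs)

theorem exists_reflTransGen_pwStep_iff_of_sym {h q : RNode} {a b : σ}
    (hs : e.subN h = some (sym b)) :
    (∃ h', Relation.ReflTransGen (EpsStep e) h h' ∧ PWStep e (h', [a]) (q, [])) ↔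
      PWStep e (h, [a]) (q, []) := by
  constructor
  · rintro ⟨h', hr, hstep⟩
    rwa [← eq_of_reflTransGen_of_sym hs hr]
  · exact fun hstep => ⟨h, .refl, hstep⟩

theorem exists_reflTransGen_pwStep_iff_of_isEvolve {h q : RNode} {a : σ} {L : List RNode}
    (hL : IsEvolve e h L) :
    (∃ h', Relation.ReflTransGen (EpsStep e) h h' ∧ PWStep e (h', [a]) (q, [])) ↔
      ∃ g ∈ L, ∃ h', Relation.ReflTransGen (EpsStep e) g h' ∧ PWStep e (h', [a]) (q, []) := by
  constructor
  · rintro ⟨h', hr, hstep⟩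
    exact ⟨h', (hL h').2 ⟨hr, a, (pwStep_singleton_iff.1 hstep).1⟩, h', .refl, hstep⟩
  · rintro ⟨g, hg, h', hr, hstep⟩
    obtain ⟨hhg, b, hs⟩ := (hL g).1 hg
    rw [eq_of_reflTransGen_of_sym hs hr] at hstep
    exact ⟨g, hhg, hstep⟩

theorem DRel.mem_iff {a : σ} {P r : List RNode} (hd : DRel e a P r) (q : RNode) :
    q ∈ r ↔ ∃ g ∈ P, ∃ h, Relation.ReflTransGen (EpsStep e) g h ∧ PWStep e (h, [a]) (q, []) := by
  induction hd with
  | nil => simp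
  | symNe hs hne _ ih =>
    rw [ih, List.exists_mem_cons_iff, exists_reflTransGen_pwStep_iff_of_sym hs,
      pwStep_singleton_iff, hs]
    simp [hne]
  | symEq hs _ ih =>
    rw [List.mem_cons, ih, List.exists_mem_cons_iff, exists_reflTransGen_pwStep_iff_of_sym hs,
      pwStep_singleton_iff]
    simp [hs]
  | ev _ hL _ ih =>
    rw [ih, List.exists_mem_cons_iff, exists_reflTransGen_pwStep_iff_of_isEvolve hL]
    simp only [List.mem_append, or_and_right, exists_or]

theorem Reaches.refl (p : RNode) : Reaches e p [] p := ⟨_, .single p⟩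

theorem Reaches.tail {p q q' : RNode} {w w' : List σ} (hr : Reaches e p w q)
    (hs : PWStep e (q, w') (q', [])) : Reaches e p (w ++ w') q' := by
  obtain ⟨t, ht⟩ := hr
  exact ⟨_, .snoc (w1 := []) ht (by simpa using hs)⟩

theorem Reaches.tail_reflTransGen {p q q' : RNode} {w : List σ} (hr : Reaches e p w q)
    (hq : Relation.ReflTransGen (EpsStep e) q q') : Reaches e p w q' := by
  induction hq with
  | refl => exact hr
  | tail _ hs ih => simpa using ih.tail hs

theorem IsPath.reflTransGen_of_nil {t : List RNode} {p q : RNode} {w : List σ}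
    (ht : IsPath e t p w q) (hw : w = []) : Relation.ReflTransGen (EpsStep e) p q := by
  induction ht with
  | single => exact .refl
  | snoc _ hs ih =>
    obtain ⟨hw₀, rfl⟩ := List.append_eq_nil_iff.1 hw
    rcases hs.eps_or_sym with ⟨-, hε⟩ | ⟨_, hb, -⟩
    · exact (ih hw₀).tail hε
    · cases hb

theorem reaches_nil_iff {p q : RNode} :
    Reaches e p [] q ↔ Relation.ReflTransGen (EpsStep e) p q :=
  ⟨fun ⟨_, ht⟩ => ht.reflTransGen_of_nil rfl, (Reaches.refl p).tail_reflTransGen⟩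

theorem IsPath.exists_of_append_singleton {t : List RNode} {p q : RNode} {v w : List σ} {a : σ}
    (ht : IsPath e t p v q) (hv : v = w ++ [a]) : ∃ h g, Reaches e p w h ∧
      PWStep e (h, [a]) (g, []) ∧ Relation.ReflTransGen (EpsStep e) g q := by
  induction ht with
  | single => simp at hv
  | @snoc t p q q' v v' v1 ht hs ih =>
    rcases hs.eps_or_sym with ⟨hv', hε⟩ | ⟨b, hb, hsym, rfl⟩
    · obtain rfl := List.append_left_eq_self.1 hv'
      obtain ⟨h, g, hh, hhg, hg⟩ := ih (by simpa using hv)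
      exact ⟨h, g, hh, hhg, hg.tail hε⟩
    · obtain rfl : v' = [b] := List.append_cancel_right hb
      obtain ⟨rfl, rfl⟩ : v = w ∧ b = a := by simpa using hv
      exact ⟨q, _, ⟨t, ht⟩, pwStep_singleton_iff.2 ⟨hsym, rfl⟩, .refl⟩

theorem reaches_append_singleton_iff {p q : RNode} {w : List σ} {a : σ} :
    Reaches e p (w ++ [a]) q ↔ ∃ h g, Reaches e p w h ∧ PWStep e (h, [a]) (g, []) ∧
      Relation.ReflTransGen (EpsStep e) g q :=
  ⟨fun ⟨_, ht⟩ => ht.exists_of_append_singleton rfl,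
    fun ⟨_, _, hh, hs, hg⟩ => (hh.tail hs).tail_reflTransGen hg⟩

theorem isFrontier_nil (p : RNode) : IsFrontier e p [] [p] := fun q => by
  simp [reaches_nil_iff]

theorem IsFrontier.mem_iff_of_dRel {p : RNode} {w : List σ} {P r : List RNode} {a : σ}
    (hP : IsFrontier e p w P) (hd : DRel e a P r) (q : RNode) :
    q ∈ r ↔ ∃ h, Reaches e p w h ∧ PWStep e (h, [a]) (q, []) := by
  rw [hd.mem_iff]
  constructor
  · rintro ⟨g, hg, h, hgh, hs⟩
    exact ⟨h, (hP h).2 ⟨g, hg, hgh⟩, hs⟩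
  · rintro ⟨h, hh, hs⟩
    obtain ⟨g, hg, hgh⟩ := (hP h).1 hh
    exact ⟨g, hg, h, hgh, hs⟩

theorem IsFrontier.of_dRel {p : RNode} {w : List σ} {P r : List RNode} {a : σ}
    (hP : IsFrontier e p w P) (hd : DRel e a P r) : IsFrontier e p (w ++ [a]) r := fun q => by
  rw [reaches_append_singleton_iff]
  constructor
  · rintro ⟨h, g, hh, hs, hgq⟩
    exact ⟨g, (hP.mem_iff_of_dRel hd g).2 ⟨h, hh, hs⟩, hgq⟩
  · rintro ⟨g, hg, hgq⟩
    obtain ⟨h, hh, hs⟩ := (hP.mem_iff_of_dRel hd g).1 hg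
    exact ⟨h, g, hh, hs, hgq⟩

theorem isFrontier_of_reflTransGen {p : RNode} {x : List σ × List RNode}
    (hrun : Relation.ReflTransGen (WPStep e) ([], [p]) x) : IsFrontier e p x.1 x.2 := by
  induction hrun with
  | refl => exact isFrontier_nil p
  | tail _ hs ih =>
    cases hs with
    | mk hd _ => exact ih.of_dRel hd

end RE

theorem wp_invariant_general {σ : Type} (e : RE σ)
    (p1 : RPos)
    (w : List σ) (P : List RNode)
    (hrun : Relation.ReflTransGen (RE.WPStep e) (([] : List σ), [some p1]) (w, P))
    (hw : w ≠ []) (q : RNode) :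
    q ∈ P ↔ ∃ (w0 : List σ) (a : σ) (t : List RNode) (h : RNode),
      w = w0 ++ [a] ∧ RE.IsPath e t (some p1) w0 h ∧
      RE.PWStep e (h, [a]) (q, ([] : List σ)) := by
  obtain ⟨x, hx, hlast⟩ := hrun.cases_tail.resolve_left (by simp [hw])
  cases hlast with
  | @mk w0 P0 a r hd _ =>
    rw [(RE.isFrontier_of_reflTransGen hx).mem_iff_of_dRel hd]
    constructor
    · rintro ⟨h, ⟨t, ht⟩, hs⟩
      exact ⟨w0, a, t, h, rfl, ht, hs⟩
    · rintro ⟨w0', a', t, h, hw0, ht, hs⟩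
      obtain ⟨rfl, rfl⟩ : w0' = w0 ∧ a' = a := by simpa using hw0.symm
      exact ⟨h, ⟨t, ht⟩, hs⟩

/-- wP frame invariant: assuming all starred bodies of `e` are
non-nullable, if `(ε, [p1]) →* (w, P)` by wP-frame transitions with `w` nonempty,
then `q` occurs in `P` iff there is a path `p1 ⇒[w] q` whose final transition is a
symbol-consuming transition consuming the last symbol of `w`. -/
theorem wp_invariant {σ : Type} (e : RE σ) (hnn : RE.NonNullableStars e)
    (p1 : RPos) (hp1 : (e.sub p1).isSome)
    (w : List σ) (P : List RNode)
    (hrun : Relation.ReflTransGen (RE.WPStep e) (([] : List σ), [some p1]) (w, P))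
    (hw : w ≠ []) (q : RNode) :
    q ∈ P ↔ ∃ (w0 : List σ) (a : σ) (t : List RNode) (h : RNode),
      w = w0 ++ [a] ∧ RE.IsPath e t (some p1) w0 h ∧
      RE.PWStep e (h, [a]) (q, ([] : List σ)) :=
  wp_invariant_general e p1 w P hrun hw q
end

section
/- Termination of epsilon-transition sequences: suppose that for every subexpression of e of the form f*, the body f does not match the empty string. Then there is no infinite sequence of consecutive non-consuming PWπ transitions; i.e., the restriction of the PWπ transition relation to transitions that do not consume an input symbol is well-founded. -/
/-!
Every non-consuming step strictly decreases the weight of the current node (the size of its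
subexpression plus, recursively, the weight of its continuation), except a step from a star node
into its body. So an infinite non-consuming run enters some star body. If the run later leaves
that body, it has traversed the body without consuming input, so the body is nullable; otherwise
the run stays forever in a strictly smaller subtree, where the same argument applies.
-/

theorem NSteps.of_chain {α : Type*} {R : α → α → Prop} {g : ℕ → α}
    (hg : ∀ n, R (g n) (g (n + 1))) (m k : ℕ) : NSteps R m (g k) (g (k + m)) := by
  induction m generalizing k with
  | zero => rfl
  | succ m ih =>
    exact ⟨g (k + 1), hg k, by simpa only [Nat.add_right_comm, Nat.add_assoc] using ih (k + 1)⟩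

namespace RE

variable {σ : Type}

def size : RE σ → ℕ
  | sym _ => 1
  | eps => 1
  | cat f1 f2 => f1.size + f2.size + 1
  | alt f1 f2 => f1.size + f2.size + 1
  | star f => f.size + 1

theorem sub_append (e : RE σ) (p s : RPos) : e.sub (p ++ s) = (e.sub p).bind (·.sub s) := by
  induction p generalizing e with
  | nil => rfl
  | cons b p ih => cases e <;> cases b <;> simp [sub, ih]

theorem size_le_of_sub {f g : RE σ} {s : RPos} (h : f.sub s = some g) : g.size ≤ f.size := by
  induction s generalizing f with
  | nil => simp_all [sub]
  | cons b s ih =>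
    cases f <;> cases b <;> simp only [sub, reduceCtorEq, Bool.false_eq_true, ite_false,
      ite_true] at h <;> simp only [size] <;> have := ih h <;> omega

theorem kontAux_append {f g : RE σ} {r₁ : RPos} (h : f.sub r₁ = some g) (cur r₂ : RPos)
    (kc : RNode) :
    kontAux f cur (r₁ ++ r₂) kc = kontAux g (cur ++ r₁) r₂ (kontAux f cur r₁ kc) := by
  induction r₁ generalizing f cur kc with
  | nil => simp_all [sub, kontAux]
  | cons b r₁ ih => cases f <;> cases b <;> simp_all [sub, kontAux]

theorem kont_append_singleton {e f : RE σ} {p : RPos} (h : e.sub p = some f) (b : Bool) :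
    e.kont (p ++ [b]) = kontAux f p [b] (e.kont p) := by
  simpa [kont] using kontAux_append h [] [b] none

variable {e : RE σ} {p : RPos}

theorem kont_cat_left {f₁ f₂ : RE σ} (h : e.sub p = some (cat f₁ f₂)) :
    e.kont (p ++ [false]) = some (p ++ [true]) := by
  simp [kont_append_singleton h, kontAux]

theorem kont_cat_right {f₁ f₂ : RE σ} (h : e.sub p = some (cat f₁ f₂)) :
    e.kont (p ++ [true]) = e.kont p := by
  simp [kont_append_singleton h, kontAux]

theorem kont_alt {f₁ f₂ : RE σ} (h : e.sub p = some (alt f₁ f₂)) (b : Bool) :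
    e.kont (p ++ [b]) = e.kont p := by
  cases b <;> simp [kont_append_singleton h, kontAux]

theorem kont_star {f : RE σ} (h : e.sub p = some (star f)) :
    e.kont (p ++ [false]) = some p := by
  simp [kont_append_singleton h, kontAux]

/-- `contWeight f r c` is the weight of the continuation of the node at `r` in `f`, when the
continuation of `f` itself has weight `c`; it mirrors `kontAux`. -/
def contWeight : RE σ → RPos → ℕ → ℕ
  | _, [], c => c
  | cat f₁ f₂, false :: r, c => contWeight f₁ r (f₂.size + c)
  | cat _ f₂, true :: r, c => contWeight f₂ r c
  | alt f₁ _, false :: r, c => contWeight f₁ r c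
  | alt _ f₂, true :: r, c => contWeight f₂ r c
  | star f, false :: r, c => contWeight f r ((star f).size + c)
  | _, _, c => c

def weight (e : RE σ) : RNode → ℕ
  | none => 0
  | some p => (e.sub p).elim 0 size + e.contWeight p 0

theorem contWeight_append {f g : RE σ} {r₁ : RPos} (h : f.sub r₁ = some g) (r₂ : RPos)
    (c : ℕ) :
    f.contWeight (r₁ ++ r₂) c = g.contWeight r₂ (f.contWeight r₁ c) := by
  induction r₁ generalizing f c with
  | nil => simp_all [sub, contWeight]
  | cons b r₁ ih => cases f <;> cases b <;> simp_all [sub, contWeight]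

theorem weight_kont {f : RE σ} (h : e.sub p = some f) :
    e.weight (e.kont p) = e.contWeight p 0 := by
  induction p using List.reverseRecOn generalizing f with
  | nil => simp [kont, kontAux, weight, contWeight]
  | append_singleton q b ih =>
    obtain ⟨g, hq, hg⟩ := Option.bind_eq_some_iff.mp ((sub_append e q [b]).symm.trans h)
    rw [kont_append_singleton hq, contWeight_append hq, ← ih hq]
    cases g <;> cases b <;>
      simp_all [sub, kontAux, contWeight, weight, sub_append, contWeight_append hq]

theorem weight_some {f : RE σ} (h : e.sub p = some f) :
    e.weight (some p) = f.size + e.weight (e.kont p) := by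
  rw [weight_kont h]
  simp [weight, h]

def EntersStar (e : RE σ) (q q' : RNode) : Prop :=
  ∃ p f, q = some p ∧ e.sub p = some (star f) ∧ q' = some (p ++ [false])

theorem weight_lt_of_epsStep {q q' : RNode} (h : e.EpsStep q q') (hq : ¬ e.EntersStar q q') :
    e.weight q' < e.weight q := by
  cases h with
  | @altL p f₁ f₂ _ h =>
    rw [weight_some (f := f₁) (by simp [sub_append, h, sub]), kont_alt h, weight_some h]
    simp only [size]
    omega
  | @altR p f₁ f₂ _ h =>
    rw [weight_some (f := f₂) (by simp [sub_append, h, sub]), kont_alt h, weight_some h]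
    simp only [size]
    omega
  | @catL p f₁ f₂ _ h =>
    rw [weight_some (f := f₁) (by simp [sub_append, h, sub]), kont_cat_left h,
      weight_some (f := f₂) (by simp [sub_append, h, sub]), kont_cat_right h, weight_some h]
    simp only [size]
    omega
  | starK h =>
    rw [weight_some h]
    simp only [size]
    omega
  | epsC h =>
    rw [weight_some h]
    simp only [size]
    omega
  | starI h => exact absurd ⟨_, _, rfl, h, rfl⟩ hq

theorem exists_entersStar_of_chain {g : ℕ → RNode} (hg : ∀ n, e.EpsStep (g n) (g (n + 1))) :
    ∃ n, e.EntersStar (g n) (g (n + 1)) := by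
  by_contra! h
  exact not_strictAnti_of_wellFoundedLT (fun n => e.weight (g n))
    (strictAnti_nat_of_succ_lt fun n => weight_lt_of_epsStep (hg n) (h n))

def InSubtree (p : RPos) (q : RNode) : Prop := ∃ s, q = some (p ++ s)

theorem InSubtree.of_append {t : RPos} {q : RNode} (h : InSubtree (p ++ t) q) : InSubtree p q :=
  let ⟨s, hs⟩ := h
  ⟨t ++ s, by simpa using hs⟩

theorem EpsStep.inSubtree_nil {q q' : RNode} (h : e.EpsStep q q') : InSubtree [] q := by
  cases h <;> exact ⟨_, rfl⟩

theorem nil_mem_lang_and_nSteps_kont_of_exit {n : ℕ} {f : RE σ} {q : RNode}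
    (hf : e.sub p = some f) (hpath : NSteps e.EpsStep n (some p) q) (hq : ¬ InSubtree p q) :
    [] ∈ f.lang ∧ ∃ k < n, NSteps e.EpsStep k (e.kont p) q := by
  induction n using Nat.strong_induction_on generalizing p f with
  | _ n ih =>
  have child {b : Bool} {g : RE σ} (hg : e.sub (p ++ [b]) = some g) {m : ℕ} (hm : m < n)
      (hpath : NSteps e.EpsStep m (some (p ++ [b])) q) :
      [] ∈ g.lang ∧ ∃ k < m, NSteps e.EpsStep k (e.kont (p ++ [b])) q :=
    ih m hm hg hpath fun h => hq h.of_append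
  rcases n with _ | m
  · exact absurd ⟨[], by simpa using hpath.symm⟩ hq
  obtain ⟨c, hstep, hrest⟩ := hpath
  cases hstep with
  | @altL _ f₁ f₂ _ h =>
    obtain rfl := Option.some_injective _ (hf.symm.trans h)
    obtain ⟨hnil, k, hk, hks⟩ :=
      child (g := f₁) (by simp [sub_append, h, sub]) m.lt_succ_self hrest
    exact ⟨(Language.mem_add _ _ _).mpr (Or.inl hnil), k, by omega, kont_alt h false ▸ hks⟩
  | @altR _ f₁ f₂ _ h =>
    obtain rfl := Option.some_injective _ (hf.symm.trans h)
    obtain ⟨hnil, k, hk, hks⟩ :=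
      child (g := f₂) (by simp [sub_append, h, sub]) m.lt_succ_self hrest
    exact ⟨(Language.mem_add _ _ _).mpr (Or.inr hnil), k, by omega, kont_alt h true ▸ hks⟩
  | @catL _ f₁ f₂ _ h =>
    obtain rfl := Option.some_injective _ (hf.symm.trans h)
    obtain ⟨hnil₁, k₁, hk₁, hks₁⟩ :=
      child (g := f₁) (by simp [sub_append, h, sub]) m.lt_succ_self hrest
    rw [kont_cat_left h] at hks₁
    obtain ⟨hnil₂, k₂, hk₂, hks₂⟩ :=
      child (g := f₂) (by simp [sub_append, h, sub]) (by omega) hks₁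
    exact ⟨by simpa [lang] using Language.append_mem_mul hnil₁ hnil₂, k₂, by omega,
      kont_cat_right h ▸ hks₂⟩
  | @starK _ f₁ _ h =>
    obtain rfl := Option.some_injective _ (hf.symm.trans h)
    exact ⟨Language.nil_mem_kstar _, m, m.lt_succ_self, hrest⟩
  | @starI _ f₁ _ h =>
    obtain ⟨-, k, hk, hks⟩ :=
      child (g := f₁) (by simp [sub_append, h, sub]) m.lt_succ_self hrest
    rw [kont_star h] at hks
    obtain ⟨hnil, k', hk', hks'⟩ := ih k (by omega) hf hks hq
    exact ⟨hnil, k', by omega, hks'⟩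
  | epsC h =>
    obtain rfl := Option.some_injective _ (hf.symm.trans h)
    exact ⟨rfl, m, m.lt_succ_self, hrest⟩

theorem not_forall_inSubtree_of_chain (hnn : e.NonNullableStars) {f : RE σ}
    (hf : e.sub p = some f) {g : ℕ → RNode} (hg : ∀ n, e.EpsStep (g n) (g (n + 1))) :
    ¬ ∀ n, InSubtree p (g n) := by
  induction hsize : f.size using Nat.strong_induction_on generalizing p f g with
  | _ N ih =>
  intro hin
  obtain ⟨n, q, f₁, hgn, hq, hgn₁⟩ := exists_entersStar_of_chain hg
  obtain ⟨s, rfl⟩ : ∃ s, q = p ++ s := by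
    obtain ⟨s, hs⟩ := hin n
    exact ⟨s, Option.some_injective _ (hgn.symm.trans hs)⟩
  have hbody : e.sub (p ++ s ++ [false]) = some f₁ := by rw [sub_append, hq]; rfl
  by_cases hstay : ∀ m, InSubtree (p ++ s ++ [false]) (g (n + 1 + m))
  · have hlt : f₁.size < N := by
      have := size_le_of_sub (f := f) (g := star f₁) (s := s)
        (by simpa [sub_append, hf] using hq)
      simp only [size] at this
      omega
    exact ih _ hlt hbody (fun m => hg (n + 1 + m)) rfl hstay
  · obtain ⟨m, hm⟩ := not_forall.mp hstay
    have hpath := NSteps.of_chain hg m (n + 1)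
    rw [hgn₁] at hpath
    exact hnn _ _ hq (nil_mem_lang_and_nSteps_kont_of_exit hbody hpath hm).1

theorem not_forall_epsStep (hnn : e.NonNullableStars) (g : ℕ → RNode) :
    ¬ ∀ n, e.EpsStep (g n) (g (n + 1)) := fun hg =>
  not_forall_inSubtree_of_chain hnn (p := []) rfl hg fun n => (hg n).inSubtree_nil

theorem PWStep.epsStep {c c' : RConf σ} (h : e.PWStep c c') (hw : c'.2 = c.2) :
    e.EpsStep c.1 c'.1 := by
  cases h with
  | symC _ => exact absurd hw (List.cons_ne_self _ _).symm
  | altL h => exact .altL h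
  | altR h => exact .altR h
  | starK h => exact .starK h
  | starI h => exact .starI h
  | catL h => exact .catL h
  | epsC h => exact .epsC h

end RE

/-- termination of ε-transition sequences: if all starred bodies
of `e` are non-nullable, then there is no infinite sequence of consecutive
non-consuming PWπ transitions; i.e. the restriction of the PWπ transition relation
to non-consuming transitions is well-founded (in the converse direction). -/
theorem eps_wf {σ : Type} (e : RE σ) (hnn : RE.NonNullableStars e) :
    (¬ ∃ g : ℕ → RConf σ,
        ∀ n, RE.PWStep e (g n) (g (n + 1)) ∧ (g (n + 1)).2 = (g n).2) ∧
      WellFounded (fun c c' : RConf σ => RE.PWStep e c' c ∧ c.2 = c'.2) := by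
  have hchain : ¬ ∃ g : ℕ → RConf σ,
      ∀ n, RE.PWStep e (g n) (g (n + 1)) ∧ (g (n + 1)).2 = (g n).2 := fun ⟨g, hg⟩ =>
    RE.not_forall_epsStep hnn (fun n => (g n).1) fun n => (hg n).1.epsStep (hg n).2
  exact ⟨hchain,
    wellFounded_iff_isEmpty_descending_chain.mpr ⟨fun ⟨g, hg⟩ => hchain ⟨g, hg⟩⟩⟩
end
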